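/- arXiv:2501.12198 — 7 statements merged into one kernel-verified Lean document; each statement's English description precedes it below -/
import Mathlib

section
/- Let K and N be positive integers, ε > 0, and f, x, λ real numbers. If |f − x| ≤ ε and |λ| ≤ K·ε/(K+N), then |(f + λ) − (K·f + N·x)/(K+N)| ≤ ε. (That is, if the manipulative group's opinion lies in the confidence interval of the normal group at some time, it still does after one iteration.) -/
/-! After one step the new manipulative opinion minus the new normal opinion is
`l + N/(K+N) · (f - x)`: the weighted average moves the normal group a fraction `K/(K+N)` of the
way towards `f`. The two terms are bounded by `Kε/(K+N)` and `Nε/(K+N)`, which add up to `ε`. -/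

theorem sub_div_add_eq_div_mul_sub {a b : ℝ} (hab : a + b ≠ 0) (f x : ℝ) :
    f - (a * f + b * x) / (a + b) = b / (a + b) * (f - x) := by
  field_simp
  ring

theorem abs_add_sub_weighted_average_le {a b ε f x l : ℝ} (hb : 0 ≤ b) (hab : 0 < a + b)
    (hfx : |f - x| ≤ ε) (hl : |l| ≤ a * ε / (a + b)) :
    |(f + l) - (a * f + b * x) / (a + b)| ≤ ε := by
  have hdrift : |b / (a + b) * (f - x)| ≤ b * ε / (a + b) := by
    rw [abs_mul, abs_of_nonneg (div_nonneg hb hab.le), div_mul_eq_mul_div]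
    gcongr
  calc |(f + l) - (a * f + b * x) / (a + b)|
      = |l + b / (a + b) * (f - x)| := by
        rw [← sub_div_add_eq_div_mul_sub hab.ne']
        congr 1; ring
    _ ≤ |l| + |b / (a + b) * (f - x)| := abs_add_le _ _
    _ ≤ a * ε / (a + b) + b * ε / (a + b) := add_le_add hl hdrift
    _ = ε := by
        rw [← add_div, ← add_mul, mul_div_cancel_left₀ _ hab.ne']

theorem hk_one_step_stay_in_confidence_general
    (K N : ℕ) (hK : 0 < K) (ε : ℝ)
    (f x l : ℝ)
    (h1 : |f - x| ≤ ε)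
    (h2 : |l| ≤ (K : ℝ) * ε / ((K : ℝ) + (N : ℝ))) :
    |(f + l) - ((K : ℝ) * f + (N : ℝ) * x) / ((K : ℝ) + (N : ℝ))| ≤ ε :=
  abs_add_sub_weighted_average_le (Nat.cast_nonneg N)
    (add_pos_of_pos_of_nonneg (Nat.cast_pos.mpr hK) (Nat.cast_nonneg N)) h1 h2

theorem hk_one_step_stay_in_confidence
    (K N : ℕ) (hK : 0 < K) (hN : 0 < N) (ε : ℝ) (hε : 0 < ε)
    (f x l : ℝ)
    (h1 : |f - x| ≤ ε)
    (h2 : |l| ≤ (K : ℝ) * ε / ((K : ℝ) + (N : ℝ))) :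
    |(f + l) - ((K : ℝ) * f + (N : ℝ) * x) / ((K : ℝ) + (N : ℝ))| ≤ ε :=
  hk_one_step_stay_in_confidence_general K N hK ε f x l h1 h2
end

section
/- Let K and N be positive integers, f₀, x₀, λ ∈ ℝ, f(t) = f₀ + λ·t, and let x : ℕ → ℝ satisfy x(0) = x₀ and x(t+1) = (K·f(t) + N·x(t))/(K+N) for all t ∈ ℕ. Then for all t ∈ ℕ, f(t) − x(t) = (N/(K+N))^t·(f₀ − x₀) + (λ·(K+N)/K)·(1 − (N/(K+N))^t). -/
/-!
The gap `g t = f t - x t` obeys the affine recursion `g (t+1) = r * g t + λ` with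
`r = N/(K+N)`, whose fixed point is `b = λ(K+N)/K` because `1 - r = K/(K+N)`;
hence `g t - b = r^t (g 0 - b)`.
-/

theorem affine_recurrence_eq {R : Type*} [CommRing R] (g : ℕ → R) (a b : R)
    (hg : ∀ t, g (t + 1) = a * g t + (1 - a) * b) (t : ℕ) :
    g t = a ^ t * g 0 + b * (1 - a ^ t) := by
  induction t with
  | zero => simp
  | succ t ih => rw [hg, ih]; ring

theorem gap_succ_eq {𝕜 : Type*} [Field 𝕜] {k n l ft xt : 𝕜} (hkn : k + n ≠ 0) :
    (ft + l) - (k * ft + n * xt) / (k + n) = n / (k + n) * (ft - xt) + l := by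
  field_simp
  ring

theorem hk_gap_closed_formula_general
    (K N : ℕ) (hK : 0 < K)
    (f₀ x₀ l : ℝ) (f : ℕ → ℝ) (hf : ∀ t : ℕ, f t = f₀ + l * (t : ℝ))
    (x : ℕ → ℝ) (hx0 : x 0 = x₀)
    (hx : ∀ t : ℕ, x (t + 1) = ((K : ℝ) * f t + (N : ℝ) * x t) / ((K : ℝ) + (N : ℝ))) :
    ∀ t : ℕ, f t - x t =
      ((N : ℝ) / ((K : ℝ) + (N : ℝ))) ^ t * (f₀ - x₀) +
        (l * ((K : ℝ) + (N : ℝ)) / (K : ℝ)) *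
          (1 - ((N : ℝ) / ((K : ℝ) + (N : ℝ))) ^ t) := by
  have hK₀ : (K : ℝ) ≠ 0 := Nat.cast_ne_zero.mpr hK.ne'
  have hKN : (K : ℝ) + N ≠ 0 := by positivity
  have hf_succ (t : ℕ) : f (t + 1) = f t + l := by rw [hf, hf]; push_cast; ring
  have h_fixed : l = (1 - N / (K + N)) * (l * (K + N) / K) := by field_simp; ring
  intro t
  convert affine_recurrence_eq (fun t ↦ f t - x t) _ _ (fun t ↦ ?_) t using 2
  · simp [hf, hx0]
  · rw [hf_succ, hx, gap_succ_eq hKN, ← h_fixed]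

theorem hk_gap_closed_formula
    (K N : ℕ) (hK : 0 < K) (hN : 0 < N)
    (f₀ x₀ l : ℝ) (f : ℕ → ℝ) (hf : ∀ t : ℕ, f t = f₀ + l * (t : ℝ))
    (x : ℕ → ℝ) (hx0 : x 0 = x₀)
    (hx : ∀ t : ℕ, x (t + 1) = ((K : ℝ) * f t + (N : ℝ) * x t) / ((K : ℝ) + (N : ℝ))) :
    ∀ t : ℕ, f t - x t =
      ((N : ℝ) / ((K : ℝ) + (N : ℝ))) ^ t * (f₀ - x₀) +
        (l * ((K : ℝ) + (N : ℝ)) / (K : ℝ)) *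
          (1 - ((N : ℝ) / ((K : ℝ) + (N : ℝ))) ^ t) :=
  hk_gap_closed_formula_general K N hK f₀ x₀ l f hf x hx0 hx
end

section
/- Let K and N be positive integers, ε > 0, f₀, x₀, λ ∈ ℝ, f(t) = f₀ + λ·t, and let x : ℕ → ℝ satisfy x(0) = x₀ and x(t+1) = (K·f(t) + N·x(t))/(K+N) for all t ∈ ℕ. If |f₀ − x₀| ≤ ε and |λ| ≤ K·ε/(K+N), then |f(t) − x(t)| ≤ ε for all t ∈ ℕ. -/
/-
The gap d t = f t - x t obeys the affine recursion d (t+1) = λ + N/(K+N) · d t. The map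
z ↦ λ + N/(K+N) · z sends [-ε, ε] into itself exactly when |λ| ≤ (1 - N/(K+N)) ε = K ε/(K+N),
so the gap, which starts in [-ε, ε], stays there forever.
-/

theorem abs_le_of_affine_recurrence {d : ℕ → ℝ} {a c ε : ℝ}
    (hd : ∀ t, d (t + 1) = c + a * d t) (h0 : |d 0| ≤ ε) (hac : |c| + |a| * ε ≤ ε) :
    ∀ t, |d t| ≤ ε := by
  intro t
  induction t with
  | zero => exact h0
  | succ t ih =>
    calc |d (t + 1)| ≤ |c| + |a| * |d t| := by
          rw [hd, ← abs_mul]; exact abs_add_le _ _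
      _ ≤ |c| + |a| * ε := by gcongr
      _ ≤ ε := hac

theorem hk_influence_forever_general
    (K N : ℕ) (hK : 0 < K) (ε : ℝ)
    (f₀ x₀ l : ℝ) (f : ℕ → ℝ) (hf : ∀ t : ℕ, f t = f₀ + l * (t : ℝ))
    (x : ℕ → ℝ) (hx0 : x 0 = x₀)
    (hx : ∀ t : ℕ, x (t + 1) = ((K : ℝ) * f t + (N : ℝ) * x t) / ((K : ℝ) + (N : ℝ)))
    (h1 : |f₀ - x₀| ≤ ε)
    (h2 : |l| ≤ (K : ℝ) * ε / ((K : ℝ) + (N : ℝ))) :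
    ∀ t : ℕ, |f t - x t| ≤ ε := by
  have hKN : (0 : ℝ) < K + N := by positivity
  have hgap : ∀ t, f (t + 1) - x (t + 1) = l + N / (K + N) * (f t - x t) := by
    intro t
    rw [hx t, hf (t + 1), hf t]
    push_cast
    field_simp
    ring
  refine abs_le_of_affine_recurrence hgap (by rwa [hf 0, hx0, Nat.cast_zero, mul_zero, add_zero]) ?_
  calc |l| + |(N : ℝ) / (K + N)| * ε
      ≤ K * ε / (K + N) + N / (K + N) * ε := by
        rw [abs_of_nonneg (div_nonneg (Nat.cast_nonneg N) hKN.le)]; gcongr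
    _ = ε := by field_simp

theorem hk_influence_forever
    (K N : ℕ) (hK : 0 < K) (hN : 0 < N) (ε : ℝ) (hε : 0 < ε)
    (f₀ x₀ l : ℝ) (f : ℕ → ℝ) (hf : ∀ t : ℕ, f t = f₀ + l * (t : ℝ))
    (x : ℕ → ℝ) (hx0 : x 0 = x₀)
    (hx : ∀ t : ℕ, x (t + 1) = ((K : ℝ) * f t + (N : ℝ) * x t) / ((K : ℝ) + (N : ℝ)))
    (h1 : |f₀ - x₀| ≤ ε)
    (h2 : |l| ≤ (K : ℝ) * ε / ((K : ℝ) + (N : ℝ))) :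
    ∀ t : ℕ, |f t - x t| ≤ ε :=
  hk_influence_forever_general K N hK ε f₀ x₀ l f hf x hx0 hx h1 h2
end

section
/- Let K and N be positive integers, ε > 0, f₀, x₀, λ ∈ ℝ, f(t) = f₀ + λ·t, and let x : ℕ → ℝ satisfy x(0) = x₀ and x(t+1) = (K·f(t) + N·x(t))/(K+N) for all t ∈ ℕ. If |f(t) − x(t)| ≤ ε for all t ∈ ℕ, then |λ| ≤ K·ε/(K+N) (and, taking t = 0, |f₀ − x₀| ≤ ε). -/
/-!
The gap `g t = f t - x t` obeys the affine recursion `g (t+1) = l + r * g t` with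
`r = N / (K + N) ∈ [0, 1)`, so it converges to the fixed point `l / (1 - r) = l (K + N) / K`.
A sequence bounded by `ε` in absolute value has its limit bounded by `ε`, which is the claim.
-/

open Filter Topology

theorem affine_recurrence_eq_fixedPoint_add {a r : ℝ} (hr : r ≠ 1) {g : ℕ → ℝ}
    (hg : ∀ t, g (t + 1) = a + r * g t) (t : ℕ) :
    g t = a / (1 - r) + r ^ t * (g 0 - a / (1 - r)) := by
  have h1r : 1 - r ≠ 0 := sub_ne_zero.mpr hr.symm
  induction t with
  | zero => ring
  | succ t ih =>
    rw [hg, ih]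
    field_simp
    ring

theorem tendsto_of_affine_recurrence {a r : ℝ} (hr : |r| < 1) {g : ℕ → ℝ}
    (hg : ∀ t, g (t + 1) = a + r * g t) :
    Tendsto g atTop (𝓝 (a / (1 - r))) := by
  have hr1 : r ≠ 1 := by rintro rfl; norm_num at hr
  have hpow : Tendsto (fun t => a / (1 - r) + r ^ t * (g 0 - a / (1 - r))) atTop
      (𝓝 (a / (1 - r) + 0 * (g 0 - a / (1 - r)))) :=
    tendsto_const_nhds.add
      ((tendsto_pow_atTop_nhds_zero_of_abs_lt_one hr).mul_const _)
  rw [zero_mul, add_zero] at hpow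
  exact hpow.congr fun t => (affine_recurrence_eq_fixedPoint_add hr1 hg t).symm

theorem hk_influence_forever_necessary_general
    (K N : ℕ) (hK : 0 < K) (ε : ℝ)
    (f₀ x₀ l : ℝ) (f : ℕ → ℝ) (hf : ∀ t : ℕ, f t = f₀ + l * (t : ℝ))
    (x : ℕ → ℝ) (hx0 : x 0 = x₀)
    (hx : ∀ t : ℕ, x (t + 1) = ((K : ℝ) * f t + (N : ℝ) * x t) / ((K : ℝ) + (N : ℝ)))
    (h : ∀ t : ℕ, |f t - x t| ≤ ε) :
    |l| ≤ (K : ℝ) * ε / ((K : ℝ) + (N : ℝ)) ∧ |f₀ - x₀| ≤ ε := by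
  have hK' : (0 : ℝ) < K := by exact_mod_cast hK
  have hKN : (0 : ℝ) < K + N := by positivity
  set r : ℝ := N / (K + N)
  have hgap : ∀ t, f (t + 1) - x (t + 1) = l + r * (f t - x t) := by
    intro t
    rw [hx, hf, hf]
    simp only [r]
    push_cast
    field_simp
    ring
  have hr : |r| < 1 := by
    rw [abs_of_nonneg (by positivity), div_lt_one hKN]
    linarith
  have hfixed : |l / (1 - r)| ≤ ε :=
    le_of_tendsto' (tendsto_of_affine_recurrence hr hgap).abs h
  have h1r : 1 - r = K / (K + N) := by
    simp only [r]
    field_simp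
    ring
  refine ⟨?_, by simpa [hf, hx0] using h 0⟩
  have hw : (0 : ℝ) < K / (K + N) := by positivity
  rw [h1r, abs_div, abs_of_pos hw, div_le_iff₀ hw] at hfixed
  exact hfixed.trans_eq (by ring)

theorem hk_influence_forever_necessary
    (K N : ℕ) (hK : 0 < K) (hN : 0 < N) (ε : ℝ) (hε : 0 < ε)
    (f₀ x₀ l : ℝ) (f : ℕ → ℝ) (hf : ∀ t : ℕ, f t = f₀ + l * (t : ℝ))
    (x : ℕ → ℝ) (hx0 : x 0 = x₀)
    (hx : ∀ t : ℕ, x (t + 1) = ((K : ℝ) * f t + (N : ℝ) * x t) / ((K : ℝ) + (N : ℝ)))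
    (h : ∀ t : ℕ, |f t - x t| ≤ ε) :
    |l| ≤ (K : ℝ) * ε / ((K : ℝ) + (N : ℝ)) ∧ |f₀ - x₀| ≤ ε :=
  hk_influence_forever_necessary_general K N hK ε f₀ x₀ l f hf x hx0 hx h
end

section
/- Let K and N be positive integers, f₀, x₀, λ ∈ ℝ, f(t) = f₀ + λ·t, and let x : ℕ → ℝ satisfy x(0) = x₀ and x(t+1) = (K·f(t) + N·x(t))/(K+N) for all t ∈ ℕ. Then for all t ∈ ℕ, |f(t) − x(t) − λ·(K+N)/K| = (N/(K+N))^t · |f₀ − x₀ − λ·(K+N)/K|; that is, the gap between the manipulative and the normal opinion approaches its limiting value λ·(K+N)/K geometrically with ratio N/(K+N). -/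
/-!
The gap `g t = f t - x t` obeys the affine recurrence `g (t + 1) = r * g t + λ` with
`r = N / (K + N)`, so it is an arithmetic-geometric sequence with fixed point
`λ / (1 - r) = λ (K + N) / K`; its distance to the fixed point is multiplied by `r` at each step.
-/

lemma eq_arithGeom_of_succ {R : Type*} [Mul R] [Add R] {a b : R} {u : ℕ → R}
    (h : ∀ n, u (n + 1) = a * u n + b) : u = arithGeom a b (u 0) := by
  funext n
  induction n with
  | zero => rfl
  | succ n ih => rw [h, ih, arithGeom_succ]

section HegselmannKrause

variable {𝕜 : Type*} [Field 𝕜] {k n : 𝕜}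

lemma hk_gap_succ (hkn : k + n ≠ 0) (a b l : 𝕜) :
    (a + l) - (k * a + n * b) / (k + n) = n / (k + n) * (a - b) + l := by
  field_simp
  ring

lemma hk_ratio_ne_one (hk : k ≠ 0) (hkn : k + n ≠ 0) : n / (k + n) ≠ 1 := by
  rw [Ne, div_eq_one_iff_eq hkn]
  intro h
  exact hk (by linear_combination -h)

lemma hk_fixedPoint (hkn : k + n ≠ 0) (l : 𝕜) :
    l / (1 - n / (k + n)) = l * (k + n) / k := by
  rw [one_sub_div hkn, add_sub_cancel_right, div_div_eq_mul_div]

end HegselmannKrause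

theorem hk_gap_geometric_approach_general
    (K N : ℕ) (hK : 0 < K)
    (f₀ x₀ l : ℝ) (f : ℕ → ℝ) (hf : ∀ t : ℕ, f t = f₀ + l * (t : ℝ))
    (x : ℕ → ℝ) (hx0 : x 0 = x₀)
    (hx : ∀ t : ℕ, x (t + 1) = ((K : ℝ) * f t + (N : ℝ) * x t) / ((K : ℝ) + (N : ℝ))) :
    ∀ t : ℕ,
      |f t - x t - l * ((K : ℝ) + (N : ℝ)) / (K : ℝ)| =
        ((N : ℝ) / ((K : ℝ) + (N : ℝ))) ^ t *
          |f₀ - x₀ - l * ((K : ℝ) + (N : ℝ)) / (K : ℝ)| := by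
  intro t
  have hKpos : (0 : ℝ) < K := by exact_mod_cast hK
  have hKN : (K : ℝ) + N ≠ 0 := by positivity
  have hgap : (fun t ↦ f t - x t) = arithGeom ((N : ℝ) / (K + N)) l (f₀ - x₀) := by
    have hstart : f₀ - x₀ = f 0 - x 0 := by simp [hf 0, hx0]
    rw [hstart]
    refine eq_arithGeom_of_succ fun t ↦ ?_
    rw [hx, hf (t + 1), hf t, Nat.cast_succ, mul_add_one, ← add_assoc, hk_gap_succ hKN]
  have hclosed : f t - x t - l * ((K : ℝ) + N) / K =
      ((N : ℝ) / (K + N)) ^ t * (f₀ - x₀ - l * ((K : ℝ) + N) / K) := by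
    rw [congrFun hgap t, arithGeom_eq (hk_ratio_ne_one hKpos.ne' hKN), hk_fixedPoint hKN,
      add_sub_cancel_right]
  rw [hclosed, abs_mul, abs_of_nonneg (by positivity)]

theorem hk_gap_geometric_approach
    (K N : ℕ) (hK : 0 < K) (hN : 0 < N)
    (f₀ x₀ l : ℝ) (f : ℕ → ℝ) (hf : ∀ t : ℕ, f t = f₀ + l * (t : ℝ))
    (x : ℕ → ℝ) (hx0 : x 0 = x₀)
    (hx : ∀ t : ℕ, x (t + 1) = ((K : ℝ) * f t + (N : ℝ) * x t) / ((K : ℝ) + (N : ℝ))) :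
    ∀ t : ℕ,
      |f t - x t - l * ((K : ℝ) + (N : ℝ)) / (K : ℝ)| =
        ((N : ℝ) / ((K : ℝ) + (N : ℝ))) ^ t *
          |f₀ - x₀ - l * ((K : ℝ) + (N : ℝ)) / (K : ℝ)| :=
  hk_gap_geometric_approach_general K N hK f₀ x₀ l f hf x hx0 hx
end

section
/- Let K and N be positive integers, ε > 0, f₀, x₀, λ ∈ ℝ, f(t) = f₀ + λ·t, and let x : ℕ → ℝ be defined by x(0) = x₀ and the bounded-confidence rule x(t+1) = (K·f(t) + N·x(t))/(K+N) if |f(t) − x(t)| ≤ ε, and x(t+1) = x(t) otherwise. If |f₀ − x₀| ≤ ε and |λ| > K·ε/(K+N), then there exists T ≥ 1 such that |f(T) − x(T)| > ε; that is, the manipulative group eventually leaves the confidence interval of the normal group and loses its influence. -/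
theorem hk_manipulators_lose_influence
    (K N : ℕ) (hK : 0 < K) (hN : 0 < N) (ε : ℝ) (hε : 0 < ε)
    (f₀ x₀ l : ℝ) (f : ℕ → ℝ) (hf : ∀ t : ℕ, f t = f₀ + l * (t : ℝ))
    (x : ℕ → ℝ) (hx0 : x 0 = x₀)
    (hx : ∀ t : ℕ, x (t + 1) =
      if |f t - x t| ≤ ε then ((K : ℝ) * f t + (N : ℝ) * x t) / ((K : ℝ) + (N : ℝ))
      else x t)
    (h1 : |f₀ - x₀| ≤ ε)
    (h2 : |l| > (K : ℝ) * ε / ((K : ℝ) + (N : ℝ))) :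
    ∃ T : ℕ, 1 ≤ T ∧ |f T - x T| > ε := by
  by_contra hcon
  push_neg at hcon
  have hKR : (0:ℝ) < (K:ℝ) := by exact_mod_cast hK
  have hNR : (0:ℝ) < (N:ℝ) := by exact_mod_cast hN
  have hC : (0:ℝ) < (K:ℝ) + (N:ℝ) := by linarith
  set C : ℝ := (K:ℝ) + (N:ℝ) with hCdef
  set a : ℝ := (N:ℝ) / C with hadef
  set dstar : ℝ := l * C / (K:ℝ) with hddef
  have hd0 : |f 0 - x 0| ≤ ε := by
    rw [hf 0, hx0]; simpa using h1
  have hall : ∀ t, |f t - x t| ≤ ε := by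
    intro t
    cases t with
    | zero => exact hd0
    | succ n => exact hcon (n+1) (Nat.succ_le_succ (Nat.zero_le n))
  have ha0 : 0 ≤ a := div_nonneg hNR.le hC.le
  have ha1 : a < 1 := by
    rw [hadef, div_lt_one hC]; linarith
  have hfix : a * dstar + l = dstar := by
    rw [hadef, hddef]; field_simp; ring
  have hfs : ∀ t : ℕ, f (t+1) = f t + l := by
    intro t; rw [hf (t+1), hf t]; push_cast; ring
  have key : ∀ t : ℕ, f t - x t = dstar + a ^ t * (f 0 - x 0 - dstar) := by
    intro t
    induction t with
    | zero => simp
    | succ n ih =>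
      have hxn := hx n
      rw [if_pos (hall n)] at hxn
      rw [hfs n, hxn]
      have : f n + l - ((K:ℝ) * f n + (N:ℝ) * x n) / C = a * (f n - x n) + l := by
        rw [hadef]; field_simp; ring
      rw [show f n + l - ((K:ℝ) * f n + (N:ℝ) * x n) / ((K:ℝ) + (N:ℝ))
          = f n + l - ((K:ℝ) * f n + (N:ℝ) * x n) / C from rfl, this, ih]
      rw [pow_succ]
      nlinarith [hfix]
  have hdstar : |dstar| > ε := by
    have : |dstar| = |l| * C / (K:ℝ) := by
      rw [hddef, abs_div, abs_mul, abs_of_pos hC, abs_of_pos hKR]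
    rw [this]
    rw [gt_iff_lt, lt_div_iff₀ hKR]
    rw [gt_iff_lt, div_lt_iff₀ hC] at h2
    nlinarith
  set e : ℝ := f 0 - x 0 - dstar with hedef
  obtain ⟨n, hn⟩ := exists_pow_lt_of_lt_one (show (0:ℝ) < (|dstar| - ε) / (|e| + 1) from
    div_pos (by linarith) (by positivity)) ha1
  have habs : |e| + 1 > 0 := by positivity
  have hlt : a ^ n * |e| < |dstar| - ε := by
    have h3 : a ^ n * (|e| + 1) < |dstar| - ε := (lt_div_iff₀ habs).mp hn
    nlinarith [pow_nonneg ha0 n]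
  have hkn := key n
  have : |f n - x n| ≥ |dstar| - a ^ n * |e| := by
    have := abs_sub_abs_le_abs_sub dstar (-(a ^ n * e))
    rw [sub_neg_eq_add] at this
    rw [hkn]
    have habs2 : |a ^ n * e| = a ^ n * |e| := by
      rw [abs_mul, abs_of_nonneg (pow_nonneg ha0 n)]
    simp only [abs_neg, habs2] at this
    linarith
  have := hall n
  linarith
end

section
/- Let K and N be positive integers, f₀, x₀, λ ∈ ℝ, f(t) = f₀ + λ·t, and let x : ℕ → ℝ satisfy x(0) = x₀ and x(t+1) = (K·f(t) + N·x(t))/(K+N) for all t ∈ ℕ. Then the increment x(t+1) − x(t) of the normal opinion converges, as t → ∞, to λ; that is, the normal group eventually moves at the same speed as the manipulative group. -/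
/-!
Write `r = N / (K + N)`, so that `x (t + 1) = (1 - r) f t + r x t`. Subtracting two consecutive
steps, the increment `d t = x (t + 1) - x t` obeys `d (t + 1) = (1 - r) λ + r d t`, an affine
contraction with fixed point `λ`; hence `d t - λ = r ^ t (d 0 - λ) → 0` because `0 ≤ r < 1`.
-/

open Filter Topology

theorem tendsto_of_sub_eq_mul_sub {u : ℕ → ℝ} {r c : ℝ} (hr : |r| < 1)
    (hu : ∀ t, u (t + 1) - c = r * (u t - c)) : Tendsto u atTop (𝓝 c) := by
  have hpow : ∀ t, u t - c = r ^ t * (u 0 - c) := by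
    intro t
    induction t with
    | zero => simp
    | succ t ih => rw [hu, ih, pow_succ']; ring
  have hlim : Tendsto (fun t => r ^ t * (u 0 - c) + c) atTop (𝓝 c) := by
    simpa using
      ((tendsto_pow_atTop_nhds_zero_of_abs_lt_one hr).mul_const (u 0 - c)).add_const c
  refine hlim.congr fun t => ?_
  linarith [hpow t]

theorem increment_sub_eq_mul_increment_sub {f x : ℕ → ℝ} {r l : ℝ}
    (hf : ∀ t, f (t + 1) - f t = l) (hx : ∀ t, x (t + 1) = (1 - r) * f t + r * x t) (t : ℕ) :
    x (t + 2) - x (t + 1) - l = r * (x (t + 1) - x t - l) := by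
  rw [hx (t + 1), hx t, ← hf t]
  ring

theorem tendsto_increment_of_relaxation {f x : ℕ → ℝ} {r l : ℝ} (hr : |r| < 1)
    (hf : ∀ t, f (t + 1) - f t = l) (hx : ∀ t, x (t + 1) = (1 - r) * f t + r * x t) :
    Tendsto (fun t => x (t + 1) - x t) atTop (𝓝 l) :=
  tendsto_of_sub_eq_mul_sub hr (increment_sub_eq_mul_increment_sub hf hx)

theorem hk_normal_speed_limit_general
    (K N : ℕ) (hK : 0 < K)
    (f₀ l : ℝ) (f : ℕ → ℝ) (hf : ∀ t : ℕ, f t = f₀ + l * (t : ℝ))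
    (x : ℕ → ℝ)
    (hx : ∀ t : ℕ, x (t + 1) = ((K : ℝ) * f t + (N : ℝ) * x t) / ((K : ℝ) + (N : ℝ))) :
    Filter.Tendsto (fun t : ℕ => x (t + 1) - x t) Filter.atTop (nhds l) := by
  have hK' : (0 : ℝ) < K := by exact_mod_cast hK
  have hS : (0 : ℝ) < K + N := by positivity
  have hr : |(N : ℝ) / (K + N)| < 1 := by
    rw [abs_of_nonneg (by positivity), div_lt_one hS]
    linarith
  refine tendsto_increment_of_relaxation (f := f) hr (fun t => ?_) (fun t => ?_)
  · rw [hf, hf]; push_cast; ring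
  · rw [hx]; field_simp; ring

theorem hk_normal_speed_limit
    (K N : ℕ) (hK : 0 < K) (hN : 0 < N)
    (f₀ x₀ l : ℝ) (f : ℕ → ℝ) (hf : ∀ t : ℕ, f t = f₀ + l * (t : ℝ))
    (x : ℕ → ℝ) (hx0 : x 0 = x₀)
    (hx : ∀ t : ℕ, x (t + 1) = ((K : ℝ) * f t + (N : ℝ) * x t) / ((K : ℝ) + (N : ℝ))) :
    Filter.Tendsto (fun t : ℕ => x (t + 1) - x t) Filter.atTop (nhds l) :=
  hk_normal_speed_limit_general K N hK f₀ l f hf x hx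
end
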